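/- arXiv:1712.07082 — 2 statements merged into one kernel-verified Lean document; each statement's English description precedes it below -/
import Mathlib

section
/- Let α₁, α₂ ∈ (0,2) and let Λ be a probability measure on Δ₁. For s = (s₁,s₂), t = (t₁,t₂) ∈ [0,∞)², define C(s,t) := (2π)^{−2} ∫_{ℝ²} [ ∏_{k=1,2} (e^{i s_k θ_k} − 1)·conj(e^{i t_k θ_k} − 1)/θ_k² ] · Ψ_{α,Λ}(θ) dθ. Then for every λ > 0, C((λ^{1/α₁}s₁, λ^{1/α₂}s₂), (λ^{1/α₁}t₁, λ^{1/α₂}t₂)) = λ^{2/α₁ + 2/α₂ − 1} · C(s,t). -/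
open MeasureTheory
open scoped ENNReal

/-- The open simplex `Δ₁ = {w ∈ (0,1)² : w₁ + w₂ = 1}`. -/
def Delta1 : Set (ℝ × ℝ) :=
  {w | w.1 ∈ Set.Ioo (0:ℝ) 1 ∧ w.2 ∈ Set.Ioo (0:ℝ) 1 ∧ w.1 + w.2 = 1}

/-- `Ψ_{α,Λ}(θ)`, valued in `[0,∞]`. -/
noncomputable def Psi (α₁ α₂ : ℝ) (Λ : Measure (ℝ × ℝ)) (θ : ℝ × ℝ) : ℝ≥0∞ :=
  ∫⁻ r in Set.Ioi (0:ℝ),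
    (∫⁻ w in Delta1, ENNReal.ofReal
      ((2 * (r * w.1) ^ (-1/α₁) / ((r * w.1) ^ (-2/α₁) + θ.1 ^ 2)) *
       (2 * (r * w.2) ^ (-1/α₂) / ((r * w.2) ^ (-2/α₂) + θ.2 ^ 2))) ∂Λ)
    * ENNReal.ofReal (r ^ (-2 : ℝ))

/-- The covariance function
`C(s,t) = (2π)^{-2} ∫_{ℝ²} ∏_k (e^{i s_k θ_k}-1) conj(e^{i t_k θ_k}-1)/θ_k² · Ψ_{α,Λ}(θ) dθ`. -/
noncomputable def Cov (α₁ α₂ : ℝ) (Λ : Measure (ℝ × ℝ)) (s t : ℝ × ℝ) : ℂ :=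
  (1 / (2 * (Real.pi : ℂ)) ^ 2) * ∫ θ : ℝ × ℝ,
    ((Complex.exp (Complex.I * (s.1 : ℂ) * (θ.1 : ℂ)) - 1) *
        (starRingEnd ℂ) (Complex.exp (Complex.I * (t.1 : ℂ) * (θ.1 : ℂ)) - 1) / (θ.1 : ℂ) ^ 2) *
    ((Complex.exp (Complex.I * (s.2 : ℂ) * (θ.2 : ℂ)) - 1) *
        (starRingEnd ℂ) (Complex.exp (Complex.I * (t.2 : ℂ) * (θ.2 : ℂ)) - 1) / (θ.2 : ℂ) ^ 2) *
    (((Psi α₁ α₂ Λ θ).toReal : ℝ) : ℂ)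

lemma smul_prod' {α β : Type*} [MeasurableSpace α] [MeasurableSpace β] (c : ℝ≥0∞)
    (μ : Measure α) (ν : Measure β) [SFinite μ] [SFinite ν] :
    (c • μ).prod ν = c • μ.prod ν := by
  ext s hs
  rw [Measure.prod_apply hs, Measure.smul_apply, Measure.prod_apply hs,
    lintegral_smul_measure, smul_eq_mul]

lemma prod_smul' {α β : Type*} [MeasurableSpace α] [MeasurableSpace β] (c : ℝ≥0∞) (hc : c ≠ ⊤)
    (μ : Measure α) (ν : Measure β) [SFinite μ] [SFinite ν] :
    μ.prod (c • ν) = c • μ.prod ν := by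
  ext s hs
  rw [Measure.prod_apply hs, Measure.smul_apply, Measure.prod_apply hs, smul_eq_mul,
    ← lintegral_const_mul' c _ hc]
  simp

-- 1d substitution lemma for lintegral over Ioi 0
lemma lintegral_Ioi_mul_left {lam : ℝ} (hlam : 0 < lam) (Φ : ℝ → ℝ≥0∞) :
    ∫⁻ r in Set.Ioi (0:ℝ), Φ r = ENNReal.ofReal lam * ∫⁻ u in Set.Ioi (0:ℝ), Φ (lam * u) := by
  set e : ℝ ≃ᵐ ℝ := (Homeomorph.mulLeft₀ lam hlam.ne').toMeasurableEquiv with he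
  have hpre : (fun x : ℝ => lam * x) ⁻¹' Set.Ioi (0:ℝ) = Set.Ioi 0 := by
    ext x
    simp only [Set.mem_preimage, Set.mem_Ioi]
    exact mul_pos_iff_of_pos_left hlam
  have hce : ⇑e = fun x : ℝ => lam * x := rfl
  have h0 : Measure.map e (volume.restrict (Set.Ioi (0:ℝ)))
      = ENNReal.ofReal lam⁻¹ • volume.restrict (Set.Ioi (0:ℝ)) := by
    rw [hce, ← hpre, ← Measure.restrict_map (measurable_const_mul lam) measurableSet_Ioi,
      Real.map_volume_mul_left hlam.ne', Measure.restrict_smul,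
      abs_of_pos (inv_pos.mpr hlam), hpre]
  calc ∫⁻ r in Set.Ioi (0:ℝ), Φ r
      = ENNReal.ofReal lam * (ENNReal.ofReal lam⁻¹ * ∫⁻ r in Set.Ioi (0:ℝ), Φ r) := by
        rw [← mul_assoc, ← ENNReal.ofReal_mul hlam.le, mul_inv_cancel₀ hlam.ne',
          ENNReal.ofReal_one, one_mul]
    _ = ENNReal.ofReal lam * ∫⁻ u in Set.Ioi (0:ℝ), Φ (lam * u) := by
        congr 1
        have h1 : ∫⁻ u in Set.Ioi (0:ℝ), Φ (lam * u) = ∫⁻ u in Set.Ioi (0:ℝ), Φ (e u) := rfl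
        rw [h1, ← lintegral_map_equiv Φ e, h0, lintegral_smul_measure, smul_eq_mul]

lemma aux1 {α lam x : ℝ} (hα : 0 < α) (hlam : 0 < lam) (hx : 0 < x) (θ : ℝ) :
    2 * x ^ (-1/α) / (x ^ (-2/α) + (lam ^ (-(1/α)) * θ) ^ 2)
      = lam ^ (1/α) * (2 * (lam⁻¹ * x) ^ (-1/α) / ((lam⁻¹ * x) ^ (-2/α) + θ ^ 2)) := by
  have hA : (lam⁻¹ * x) ^ (-1/α) = lam ^ (1/α) * x ^ (-1/α) := by
    rw [Real.mul_rpow (inv_nonneg.2 hlam.le) hx.le, Real.inv_rpow hlam.le,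
      ← Real.rpow_neg hlam.le]
    congr 2
    ring
  have hB : (lam⁻¹ * x) ^ (-2/α) = lam ^ (2/α) * x ^ (-2/α) := by
    rw [Real.mul_rpow (inv_nonneg.2 hlam.le) hx.le, Real.inv_rpow hlam.le,
      ← Real.rpow_neg hlam.le]
    congr 2
    ring
  have hC : (lam ^ (-(1/α)) * θ) ^ 2 = lam ^ (-(2/α)) * θ ^ 2 := by
    rw [mul_pow, ← Real.rpow_natCast (lam ^ (-(1/α))) 2, ← Real.rpow_mul hlam.le]
    congr 2
    push_cast
    ring
  have e1 : lam ^ (1/α) * lam ^ (1/α) = lam ^ (2/α) := by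
    rw [← Real.rpow_add hlam]; congr 1; ring
  have e2 : lam ^ (2/α) * lam ^ (-(2/α)) = 1 := by
    rw [← Real.rpow_add hlam]; simp
  have hd1 : (0:ℝ) < x ^ (-2/α) + lam ^ (-(2/α)) * θ ^ 2 := by positivity
  have hd2 : (0:ℝ) < lam ^ (2/α) * x ^ (-2/α) + θ ^ 2 := by positivity
  rw [hA, hB, hC, ← mul_div_assoc, div_eq_div_iff hd1.ne' hd2.ne']
  linear_combination (-(2 * x ^ (-1/α) * x ^ (-2/α) + 2 * x ^ (-1/α) * lam ^ (-(2/α)) * θ ^ 2)) * e1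
    + (-(2 * x ^ (-1/α) * θ ^ 2)) * e2

lemma aux2 {α₁ α₂ lam : ℝ} (hα₁ : 0 < α₁) (hα₂ : 0 < α₂) (hlam : 0 < lam)
    {u w1 w2 : ℝ} (hu : 0 < u) (hw1 : 0 < w1) (hw2 : 0 < w2) (θ1 θ2 : ℝ) :
    (2 * (lam * u * w1) ^ (-1/α₁) / ((lam * u * w1) ^ (-2/α₁) + (lam ^ (-(1/α₁)) * θ1) ^ 2)) *
    (2 * (lam * u * w2) ^ (-1/α₂) / ((lam * u * w2) ^ (-2/α₂) + (lam ^ (-(1/α₂)) * θ2) ^ 2))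
    = lam ^ (1/α₁ + 1/α₂) *
      ((2 * (u * w1) ^ (-1/α₁) / ((u * w1) ^ (-2/α₁) + θ1 ^ 2)) *
       (2 * (u * w2) ^ (-1/α₂) / ((u * w2) ^ (-2/α₂) + θ2 ^ 2))) := by
  have hx1 : (0:ℝ) < lam * u * w1 := by positivity
  have hx2 : (0:ℝ) < lam * u * w2 := by positivity
  have e1 : lam⁻¹ * (lam * u * w1) = u * w1 := by field_simp
  have e2 : lam⁻¹ * (lam * u * w2) = u * w2 := by field_simp
  have e3 : lam ^ (1/α₁ + 1/α₂) = lam ^ (1/α₁) * lam ^ (1/α₂) := Real.rpow_add hlam _ _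
  rw [aux1 hα₁ hlam hx1 θ1, aux1 hα₂ hlam hx2 θ2, e1, e2, e3]
  ring

lemma Delta1_meas : MeasurableSet Delta1 := by
  have : Delta1 = (Prod.fst ⁻¹' Set.Ioo (0:ℝ) 1) ∩ (Prod.snd ⁻¹' Set.Ioo (0:ℝ) 1) ∩
      {w : ℝ × ℝ | w.1 + w.2 = 1} := by
    ext w; simp [Delta1]; tauto
  rw [this]
  exact ((measurable_fst measurableSet_Ioo).inter (measurable_snd measurableSet_Ioo)).inter
    (measurableSet_eq_fun (by fun_prop) measurable_const)

lemma psi_scale {α₁ α₂ : ℝ} (hα₁ : 0 < α₁) (hα₂ : 0 < α₂) {lam : ℝ} (hlam : 0 < lam)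
    (Λ : Measure (ℝ × ℝ)) (θ : ℝ × ℝ) :
    Psi α₁ α₂ Λ (lam ^ (-(1/α₁)) * θ.1, lam ^ (-(1/α₂)) * θ.2)
      = ENNReal.ofReal (lam ^ (1/α₁ + 1/α₂ - 1)) * Psi α₁ α₂ Λ θ := by
  unfold Psi
  rw [lintegral_Ioi_mul_left hlam]
  have key : ∀ᵐ u ∂(volume : Measure ℝ), u ∈ Set.Ioi (0:ℝ) →
      ((∫⁻ w in Delta1, ENNReal.ofReal
        ((2 * (lam * u * w.1) ^ (-1/α₁) /
            ((lam * u * w.1) ^ (-2/α₁) + (lam ^ (-(1/α₁)) * θ.1) ^ 2)) *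
         (2 * (lam * u * w.2) ^ (-1/α₂) /
            ((lam * u * w.2) ^ (-2/α₂) + (lam ^ (-(1/α₂)) * θ.2) ^ 2))) ∂Λ)
        * ENNReal.ofReal ((lam * u) ^ (-2 : ℝ)))
      = ENNReal.ofReal (lam ^ (1/α₁ + 1/α₂ + (-2:ℝ))) *
        ((∫⁻ w in Delta1, ENNReal.ofReal
          ((2 * (u * w.1) ^ (-1/α₁) / ((u * w.1) ^ (-2/α₁) + θ.1 ^ 2)) *
           (2 * (u * w.2) ^ (-1/α₂) / ((u * w.2) ^ (-2/α₂) + θ.2 ^ 2))) ∂Λ)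
          * ENNReal.ofReal (u ^ (-2 : ℝ))) := by
    refine Filter.Eventually.of_forall (fun u hu => ?_)
    have hu : (0:ℝ) < u := hu
    have hinner : (∫⁻ w in Delta1, ENNReal.ofReal
        ((2 * (lam * u * w.1) ^ (-1/α₁) /
            ((lam * u * w.1) ^ (-2/α₁) + (lam ^ (-(1/α₁)) * θ.1) ^ 2)) *
         (2 * (lam * u * w.2) ^ (-1/α₂) /
            ((lam * u * w.2) ^ (-2/α₂) + (lam ^ (-(1/α₂)) * θ.2) ^ 2))) ∂Λ)
        = ENNReal.ofReal (lam ^ (1/α₁ + 1/α₂)) *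
          ∫⁻ w in Delta1, ENNReal.ofReal
          ((2 * (u * w.1) ^ (-1/α₁) / ((u * w.1) ^ (-2/α₁) + θ.1 ^ 2)) *
           (2 * (u * w.2) ^ (-1/α₂) / ((u * w.2) ^ (-2/α₂) + θ.2 ^ 2))) ∂Λ := by
      rw [← lintegral_const_mul' _ _ ENNReal.ofReal_ne_top]
      refine setLIntegral_congr_fun Delta1_meas (fun w hw => ?_)
      obtain ⟨hw1, hw2, -⟩ := hw
      rw [← ENNReal.ofReal_mul (by positivity)]
      exact congrArg ENNReal.ofReal (aux2 hα₁ hα₂ hlam hu hw1.1 hw2.1 θ.1 θ.2)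
    have hr : ENNReal.ofReal ((lam * u) ^ (-2 : ℝ))
        = ENNReal.ofReal (lam ^ (-2:ℝ)) * ENNReal.ofReal (u ^ (-2:ℝ)) := by
      rw [← ENNReal.ofReal_mul (by positivity), ← Real.mul_rpow hlam.le hu.le]
    rw [hinner, hr,
      show lam ^ (1/α₁ + 1/α₂ + (-2:ℝ)) = lam ^ (1/α₁ + 1/α₂) * lam ^ ((-2):ℝ) from
        Real.rpow_add hlam _ _,
      ENNReal.ofReal_mul (by positivity)]
    ring
  rw [setLIntegral_congr_fun_ae measurableSet_Ioi key, lintegral_const_mul' _ _ ENNReal.ofReal_ne_top,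
    ← mul_assoc, ← ENNReal.ofReal_mul hlam.le]
  congr 2
  have h2 : lam ^ (1/α₁ + 1/α₂ - 1) = lam ^ (1:ℝ) * lam ^ (1/α₁ + 1/α₂ + (-2:ℝ)) := by
    rw [← Real.rpow_add hlam]; congr 1; ring
  rw [h2, Real.rpow_one]

noncomputable def Cintegrand (α₁ α₂ : ℝ) (Λ : Measure (ℝ × ℝ)) (s t : ℝ × ℝ) (θ : ℝ × ℝ) : ℂ :=
  ((Complex.exp (Complex.I * (s.1 : ℂ) * (θ.1 : ℂ)) - 1) *
      (starRingEnd ℂ) (Complex.exp (Complex.I * (t.1 : ℂ) * (θ.1 : ℂ)) - 1) / (θ.1 : ℂ) ^ 2) *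
  ((Complex.exp (Complex.I * (s.2 : ℂ) * (θ.2 : ℂ)) - 1) *
      (starRingEnd ℂ) (Complex.exp (Complex.I * (t.2 : ℂ) * (θ.2 : ℂ)) - 1) / (θ.2 : ℂ) ^ 2) *
  (((Psi α₁ α₂ Λ θ).toReal : ℝ) : ℂ)

lemma Cov_eq (α₁ α₂ : ℝ) (Λ : Measure (ℝ × ℝ)) (s t : ℝ × ℝ) :
    Cov α₁ α₂ Λ s t = (1 / (2 * (Real.pi : ℂ)) ^ 2) * ∫ θ : ℝ × ℝ, Cintegrand α₁ α₂ Λ s t θ := rfl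

-- pointwise transformation of the integrand
lemma integrand_comp {α₁ α₂ : ℝ} (hα₁ : 0 < α₁) (hα₂ : 0 < α₂) {lam : ℝ} (hlam : 0 < lam)
    (Λ : Measure (ℝ × ℝ)) (s t : ℝ × ℝ) (p : ℝ × ℝ) :
    Cintegrand α₁ α₂ Λ (lam ^ (1/α₁) * s.1, lam ^ (1/α₂) * s.2)
        (lam ^ (1/α₁) * t.1, lam ^ (1/α₂) * t.2)
        (lam ^ (-(1/α₁)) * p.1, lam ^ (-(1/α₂)) * p.2)
      = ((((lam ^ (-(1/α₁)) : ℝ) ^ 2)⁻¹ * ((lam ^ (-(1/α₂)) : ℝ) ^ 2)⁻¹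
          * lam ^ (1/α₁ + 1/α₂ - 1) : ℝ) : ℂ) * Cintegrand α₁ α₂ Λ s t p := by
  have hone : ∀ β : ℝ, 0 < β → ((lam ^ (1/β) : ℝ) : ℂ) * ((lam ^ (-(1/β)) : ℝ) : ℂ) = 1 := by
    intro β hβ
    rw [← Complex.ofReal_mul, ← Real.rpow_add hlam, add_neg_cancel, Real.rpow_zero,
      Complex.ofReal_one]
  have h1s : Complex.I * ((lam ^ (1/α₁) * s.1 : ℝ) : ℂ) * ((lam ^ (-(1/α₁)) * p.1 : ℝ) : ℂ)
      = Complex.I * (s.1 : ℂ) * (p.1 : ℂ) := by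
    push_cast
    linear_combination Complex.I * (s.1:ℂ) * (p.1:ℂ) * hone α₁ hα₁
  have h1t : Complex.I * ((lam ^ (1/α₁) * t.1 : ℝ) : ℂ) * ((lam ^ (-(1/α₁)) * p.1 : ℝ) : ℂ)
      = Complex.I * (t.1 : ℂ) * (p.1 : ℂ) := by
    push_cast
    linear_combination Complex.I * (t.1:ℂ) * (p.1:ℂ) * hone α₁ hα₁
  have h2s : Complex.I * ((lam ^ (1/α₂) * s.2 : ℝ) : ℂ) * ((lam ^ (-(1/α₂)) * p.2 : ℝ) : ℂ)
      = Complex.I * (s.2 : ℂ) * (p.2 : ℂ) := by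
    push_cast
    linear_combination Complex.I * (s.2:ℂ) * (p.2:ℂ) * hone α₂ hα₂
  have h2t : Complex.I * ((lam ^ (1/α₂) * t.2 : ℝ) : ℂ) * ((lam ^ (-(1/α₂)) * p.2 : ℝ) : ℂ)
      = Complex.I * (t.2 : ℂ) * (p.2 : ℂ) := by
    push_cast
    linear_combination Complex.I * (t.2:ℂ) * (p.2:ℂ) * hone α₂ hα₂
  have hPsi : ((Psi α₁ α₂ Λ (lam ^ (-(1/α₁)) * p.1, lam ^ (-(1/α₂)) * p.2)).toReal : ℝ)
      = lam ^ (1/α₁ + 1/α₂ - 1) * (Psi α₁ α₂ Λ p).toReal := by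
    rw [psi_scale hα₁ hα₂ hlam Λ p, ENNReal.toReal_mul,
      ENNReal.toReal_ofReal (by positivity)]
  unfold Cintegrand
  dsimp only
  rw [h1s, h1t, h2s, h2t, hPsi]
  push_cast
  ring

/-- operator-scaling property of the covariance `C`:
`C((λ^{1/α₁}s₁, λ^{1/α₂}s₂),(λ^{1/α₁}t₁, λ^{1/α₂}t₂)) = λ^{2/α₁+2/α₂-1} C(s,t)`. -/
theorem stmt_6 (α₁ α₂ : ℝ) (hα₁ : α₁ ∈ Set.Ioo (0:ℝ) 2) (hα₂ : α₂ ∈ Set.Ioo (0:ℝ) 2)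
    (Λ : Measure (ℝ × ℝ)) [IsProbabilityMeasure Λ] (hΛ : Λ Delta1ᶜ = 0)
    (s t : ℝ × ℝ) (hs1 : 0 ≤ s.1) (hs2 : 0 ≤ s.2) (ht1 : 0 ≤ t.1) (ht2 : 0 ≤ t.2)
    (lam : ℝ) (hlam : 0 < lam) :
    Cov α₁ α₂ Λ (lam ^ (1/α₁) * s.1, lam ^ (1/α₂) * s.2)
        (lam ^ (1/α₁) * t.1, lam ^ (1/α₂) * t.2)
      = ((lam ^ (2/α₁ + 2/α₂ - 1) : ℝ) : ℂ) * Cov α₁ α₂ Λ s t := by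
  obtain ⟨hα₁0, -⟩ := hα₁
  obtain ⟨hα₂0, -⟩ := hα₂
  have hc₁ : (0:ℝ) < lam ^ (-(1/α₁)) := Real.rpow_pos_of_pos hlam _
  have hc₂ : (0:ℝ) < lam ^ (-(1/α₂)) := Real.rpow_pos_of_pos hlam _
  set S : ℝ × ℝ := (lam ^ (1/α₁) * s.1, lam ^ (1/α₂) * s.2) with hS
  set T : ℝ × ℝ := (lam ^ (1/α₁) * t.1, lam ^ (1/α₂) * t.2) with hT
  set e : (ℝ × ℝ) ≃ᵐ (ℝ × ℝ) :=
    ((Homeomorph.mulLeft₀ _ hc₁.ne').prodCongr (Homeomorph.mulLeft₀ _ hc₂.ne')).toMeasurableEquiv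
    with he
  have hmap : Measure.map (⇑e) (volume : Measure (ℝ × ℝ))
      = ENNReal.ofReal ((lam ^ (-(1/α₁)))⁻¹ * (lam ^ (-(1/α₂)))⁻¹) • volume := by
    have hce : ⇑e = Prod.map (fun x : ℝ => lam ^ (-(1/α₁)) * x)
        (fun x : ℝ => lam ^ (-(1/α₂)) * x) := rfl
    rw [hce, Measure.volume_eq_prod,
      ← Measure.map_prod_map _ _ (measurable_const_mul _) (measurable_const_mul _),
      Real.map_volume_mul_left hc₁.ne', Real.map_volume_mul_left hc₂.ne',
      smul_prod', prod_smul' _ ENNReal.ofReal_ne_top, smul_smul,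
      ← ENNReal.ofReal_mul (abs_nonneg _), ← Measure.volume_eq_prod,
      abs_of_pos (inv_pos.2 hc₁), abs_of_pos (inv_pos.2 hc₂)]
  have h2 : (fun p : ℝ × ℝ => Cintegrand α₁ α₂ Λ S T (e p))
      = fun p => ((((lam ^ (-(1/α₁)) : ℝ) ^ 2)⁻¹ * ((lam ^ (-(1/α₂)) : ℝ) ^ 2)⁻¹
          * lam ^ (1/α₁ + 1/α₂ - 1) : ℝ) : ℂ) * Cintegrand α₁ α₂ Λ s t p :=
    funext fun p => integrand_comp hα₁0 hα₂0 hlam Λ s t p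
  have h1 : (∫ p : ℝ × ℝ, Cintegrand α₁ α₂ Λ S T (e p))
      = (((lam ^ (-(1/α₁)))⁻¹ * (lam ^ (-(1/α₂)))⁻¹ : ℝ)) • ∫ θ : ℝ × ℝ,
          Cintegrand α₁ α₂ Λ S T θ := by
    rw [← integral_map_equiv e (fun θ => Cintegrand α₁ α₂ Λ S T θ), hmap, integral_smul_measure,
      ENNReal.toReal_ofReal (by positivity)]
  have h3 : (∫ θ : ℝ × ℝ, Cintegrand α₁ α₂ Λ S T θ)
      = ((lam ^ (-(1/α₁)) * lam ^ (-(1/α₂)) : ℝ)) •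
        ∫ p : ℝ × ℝ, Cintegrand α₁ α₂ Λ S T (e p) := by
    rw [h1, smul_smul]
    rw [show (lam ^ (-(1/α₁)) * lam ^ (-(1/α₂)) * ((lam ^ (-(1/α₁)))⁻¹ * (lam ^ (-(1/α₂)))⁻¹) : ℝ)
      = 1 by field_simp]
    rw [one_smul]
  have hreal : (lam ^ (-(1/α₁)) * lam ^ (-(1/α₂)) : ℝ) *
      (((lam ^ (-(1/α₁)) : ℝ) ^ 2)⁻¹ * ((lam ^ (-(1/α₂)) : ℝ) ^ 2)⁻¹
        * lam ^ (1/α₁ + 1/α₂ - 1)) = lam ^ (2/α₁ + 2/α₂ - 1) := by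
    have k1 : (lam ^ (-(1/α₁)) : ℝ) * ((lam ^ (-(1/α₁)) : ℝ) ^ 2)⁻¹ = lam ^ (1/α₁) := by
      rw [← Real.rpow_natCast (lam ^ (-(1/α₁))) 2, ← Real.rpow_mul hlam.le,
        ← Real.rpow_neg hlam.le, ← Real.rpow_add hlam]
      congr 1; push_cast; ring
    have k2 : (lam ^ (-(1/α₂)) : ℝ) * ((lam ^ (-(1/α₂)) : ℝ) ^ 2)⁻¹ = lam ^ (1/α₂) := by
      rw [← Real.rpow_natCast (lam ^ (-(1/α₂))) 2, ← Real.rpow_mul hlam.le,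
        ← Real.rpow_neg hlam.le, ← Real.rpow_add hlam]
      congr 1; push_cast; ring
    calc (lam ^ (-(1/α₁)) * lam ^ (-(1/α₂)) : ℝ) *
        (((lam ^ (-(1/α₁)) : ℝ) ^ 2)⁻¹ * ((lam ^ (-(1/α₂)) : ℝ) ^ 2)⁻¹
          * lam ^ (1/α₁ + 1/α₂ - 1))
        = (lam ^ (-(1/α₁)) * ((lam ^ (-(1/α₁)) : ℝ) ^ 2)⁻¹) *
          (lam ^ (-(1/α₂)) * ((lam ^ (-(1/α₂)) : ℝ) ^ 2)⁻¹) * lam ^ (1/α₁ + 1/α₂ - 1) := by ring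
      _ = lam ^ (1/α₁) * lam ^ (1/α₂) * lam ^ (1/α₁ + 1/α₂ - 1) := by rw [k1, k2]
      _ = lam ^ (2/α₁ + 2/α₂ - 1) := by
          rw [← Real.rpow_add hlam, ← Real.rpow_add hlam]
          congr 1; ring
  have hsc : ((lam ^ (-(1/α₁)) * lam ^ (-(1/α₂)) : ℝ) : ℂ) *
      ((((lam ^ (-(1/α₁)) : ℝ) ^ 2)⁻¹ * ((lam ^ (-(1/α₂)) : ℝ) ^ 2)⁻¹
        * lam ^ (1/α₁ + 1/α₂ - 1) : ℝ) : ℂ) = ((lam ^ (2/α₁ + 2/α₂ - 1) : ℝ) : ℂ) := by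
    rw [← Complex.ofReal_mul, hreal]
  rw [Cov_eq, Cov_eq, h3, h2, integral_const_mul, Complex.real_smul]
  linear_combination (1 / (2 * (Real.pi : ℂ)) ^ 2 * ∫ θ : ℝ × ℝ, Cintegrand α₁ α₂ Λ s t θ) * hsc
end

section
/- There exists a constant C such that for all n ∈ ℕ, all t ∈ [0,1], and all θ ∈ ℝ with 0 < |θ| < nπ, setting m := ⌊nt⌋, one has | ∑_{ℓ=−m}^{m} |ℓ|·(m − |ℓ|)² · e^{iℓθ/n} | ≤ C · n⁴ · t² · min{ t² , 1/θ² }. -/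
/-!
With `z = exp (iθ/n)` and `a ℓ = |ℓ|(m - |ℓ|)²` on `[-m, m]`, the sum is `S = ∑ a ℓ z^ℓ`, and
trivially `‖S‖ ≤ ∑ |a ℓ| ≤ 3m⁴ ≤ 3n⁴t⁴`. Summing by parts twice gives
`(z⁻¹ - 1)² S = ∑ (Δ²a) ℓ z^ℓ`. The coefficients are cubic in `|ℓ|` on `[0, m]`, so their second
differences are `O(m)`, except at the kink of `|ℓ|` at `0`, where it is `O(m²)`; hence
`‖z⁻¹ - 1‖² ‖S‖ = O(m²)`. By Jordan's inequality `‖z⁻¹ - 1‖ = 2 |sin (θ/2n)| ≥ 2|θ|/(πn)`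
for `|θ| ≤ nπ`, so `‖S‖ = O(m²n²/θ²) = O(n⁴t²/θ²)`.
-/

open Finset Complex fwdDiff

section SummationByParts

variable {K : Type*} [Field K] {a : ℤ → K} {p q : ℤ}

theorem sum_Icc_fwdDiff_mul_zpow (ha : ∀ ℓ ∉ Icc p q, a ℓ = 0) {z : K} (hz : z ≠ 0) :
    ∑ ℓ ∈ Icc (p - 1) q, Δ_[1] a ℓ * z ^ ℓ = (z⁻¹ - 1) * ∑ ℓ ∈ Icc p q, a ℓ * z ^ ℓ := by
  have hextend : ∀ {p' q'}, p' ≤ p → q ≤ q' →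
      ∑ ℓ ∈ Icc p' q', a ℓ * z ^ ℓ = ∑ ℓ ∈ Icc p q, a ℓ * z ^ ℓ := fun hp hq =>
    (sum_subset (Icc_subset_Icc hp hq) fun ℓ _ hℓ => by rw [ha ℓ hℓ, zero_mul]).symm
  have hshift : ∑ ℓ ∈ Icc (p - 1) q, a (ℓ + 1) * z ^ ℓ
      = z⁻¹ * ∑ ℓ ∈ Icc p (q + 1), a ℓ * z ^ ℓ := by
    have : Icc p (q + 1) = (Icc (p - 1) q).map (addRightEmbedding 1) := by
      simp [map_add_right_Icc]
    rw [this, sum_map, mul_sum]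
    refine sum_congr rfl fun ℓ _ => ?_
    simp only [addRightEmbedding_apply, zpow_add_one₀ hz]
    field_simp
  simp only [fwdDiff, sub_mul, sum_sub_distrib, hshift, hextend (by omega : p - 1 ≤ p) le_rfl,
    hextend le_rfl (by omega : q ≤ q + 1)]
  ring

theorem sum_Icc_fwdDiff_fwdDiff_mul_zpow (ha : ∀ ℓ ∉ Icc p q, a ℓ = 0) {z : K} (hz : z ≠ 0) :
    ∑ ℓ ∈ Icc (p - 2) q, Δ_[1] (Δ_[1] a) ℓ * z ^ ℓ
      = (z⁻¹ - 1) ^ 2 * ∑ ℓ ∈ Icc p q, a ℓ * z ^ ℓ := by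
  have hΔa : ∀ ℓ ∉ Icc (p - 1) q, Δ_[1] a ℓ = 0 := fun ℓ hℓ => by
    simp only [mem_Icc, not_and_or, not_le] at hℓ
    rw [fwdDiff, ha ℓ (by simp only [mem_Icc]; omega), ha (ℓ + 1) (by simp only [mem_Icc]; omega),
      sub_zero]
  rw [show p - 2 = p - 1 - 1 by ring, sum_Icc_fwdDiff_mul_zpow hΔa hz,
    sum_Icc_fwdDiff_mul_zpow ha hz]
  ring

end SummationByParts

theorem norm_sum_intCast_mul_zpow_le (s : Finset ℤ) (c : ℤ → ℤ) {z : ℂ} (hz : ‖z‖ = 1) :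
    ‖∑ ℓ ∈ s, (c ℓ : ℂ) * z ^ ℓ‖ ≤ ((∑ ℓ ∈ s, |c ℓ| : ℤ) : ℝ) := by
  push_cast
  refine (norm_sum_le _ _).trans_eq (sum_congr rfl fun ℓ _ => ?_)
  rw [norm_mul, norm_zpow, hz, one_zpow, mul_one, norm_intCast]

theorem mul_abs_le_norm_exp_I_mul_ofReal_sub_one {x : ℝ} (hx : |x| ≤ Real.pi) :
    2 / Real.pi * |x| ≤ ‖exp (I * x) - 1‖ := by
  have h := Real.mul_abs_le_abs_sin (x := x / 2) (by rw [abs_div, abs_two]; linarith)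
  rw [abs_div, abs_two] at h
  rw [norm_exp_I_mul_ofReal_sub_one, norm_mul, Real.norm_eq_abs, Real.norm_eq_abs, abs_two]
  linarith

namespace FourthMoment

def coeff (m : ℕ) (ℓ : ℤ) : ℤ := if |ℓ| ≤ m then |ℓ| * (m - |ℓ|) ^ 2 else 0

variable (m : ℕ)

theorem coeff_neg (ℓ : ℤ) : coeff m (-ℓ) = coeff m ℓ := by
  simp only [coeff, abs_neg]

theorem coeff_of_nonneg {ℓ : ℤ} (hℓ : 0 ≤ ℓ) :
    coeff m ℓ = if ℓ ≤ m then ℓ * (m - ℓ) ^ 2 else 0 := by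
  simp only [coeff, abs_of_nonneg hℓ]

theorem coeff_eq_zero {ℓ : ℤ} (hℓ : ℓ ∉ Icc (-(m : ℤ)) m) : coeff m ℓ = 0 :=
  if_neg (by rwa [abs_le, ← mem_Icc])

theorem abs_coeff_le (ℓ : ℤ) : |coeff m ℓ| ≤ m ^ 3 := by
  unfold coeff
  split_ifs with h
  · have h₀ : 0 ≤ (m : ℤ) - |ℓ| := by omega
    rw [abs_of_nonneg (by positivity)]
    calc |ℓ| * ((m : ℤ) - |ℓ|) ^ 2 ≤ m * (m : ℤ) ^ 2 := by gcongr; linarith [abs_nonneg ℓ]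
      _ = (m : ℤ) ^ 3 := by ring
  · simp

theorem fwdDiff_fwdDiff_coeff (ℓ : ℤ) :
    Δ_[1] (Δ_[1] (coeff m)) ℓ = coeff m (ℓ + 2) - 2 * coeff m (ℓ + 1) + coeff m ℓ := by
  simp only [fwdDiff]
  ring_nf

theorem abs_fwdDiff_fwdDiff_coeff_le_of_nonneg {ℓ : ℤ} (hℓ : 0 ≤ ℓ) :
    |Δ_[1] (Δ_[1] (coeff m)) ℓ| ≤ 6 * m := by
  simp only [fwdDiff_fwdDiff_coeff, coeff_of_nonneg m hℓ,
    coeff_of_nonneg m (by omega : (0 : ℤ) ≤ ℓ + 1), coeff_of_nonneg m (by omega : (0 : ℤ) ≤ ℓ + 2)]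
  obtain h | rfl | rfl | h : ℓ + 2 ≤ m ∨ ℓ = m - 1 ∨ ℓ = m ∨ m < ℓ := by omega
  · rw [if_pos h, if_pos (by omega), if_pos (by omega), abs_le]
    constructor <;> nlinarith
  · rw [if_neg (by omega), if_pos (by omega), if_pos (by omega), abs_le]
    constructor <;> nlinarith
  · simp
  · rw [if_neg (by omega), if_neg (by omega), if_neg (by omega)]
    simp

theorem abs_fwdDiff_fwdDiff_coeff_le {ℓ : ℤ} (hℓ : ℓ ≠ -1) :
    |Δ_[1] (Δ_[1] (coeff m)) ℓ| ≤ 6 * m := by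
  rcases le_or_gt 0 ℓ with hℓ₀ | hℓ₀
  · exact abs_fwdDiff_fwdDiff_coeff_le_of_nonneg m hℓ₀
  · have hsymm : Δ_[1] (Δ_[1] (coeff m)) ℓ = Δ_[1] (Δ_[1] (coeff m)) (-ℓ - 2) := by
      simp only [fwdDiff_fwdDiff_coeff, ← coeff_neg m (ℓ + 2), ← coeff_neg m (ℓ + 1),
        ← coeff_neg m ℓ]
      ring_nf
    rw [hsymm]
    exact abs_fwdDiff_fwdDiff_coeff_le_of_nonneg m (by omega)

theorem abs_fwdDiff_fwdDiff_coeff_neg_one_le : |Δ_[1] (Δ_[1] (coeff m)) (-1)| ≤ 2 * m ^ 2 := by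
  rw [fwdDiff_fwdDiff_coeff]
  norm_num [coeff]
  split_ifs
  · rw [abs_of_nonneg (by positivity)]
    nlinarith
  · simp

theorem sum_abs_fwdDiff_fwdDiff_coeff_le :
    ∑ ℓ ∈ Icc (-(m : ℤ) - 2) m, |Δ_[1] (Δ_[1] (coeff m)) ℓ| ≤ 26 * m ^ 2 := by
  have hmem : (-1 : ℤ) ∈ Icc (-(m : ℤ) - 2) m := by simp only [mem_Icc]; omega
  have hcard : #((Icc (-(m : ℤ) - 2) m).erase (-1)) = 2 * m + 2 := by
    rw [card_erase_of_mem hmem, Int.card_Icc]; omega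
  rw [← add_sum_erase _ _ hmem]
  have hrest := sum_le_card_nsmul ((Icc (-(m : ℤ) - 2) m).erase (-1)) _ (6 * (m : ℤ)) fun ℓ hℓ =>
    abs_fwdDiff_fwdDiff_coeff_le m (ne_of_mem_erase hℓ)
  rw [hcard, nsmul_eq_mul] at hrest
  push_cast at hrest
  nlinarith [abs_fwdDiff_fwdDiff_coeff_neg_one_le m, Int.le_self_sq (m : ℤ)]

noncomputable def coeffSum (z : ℂ) : ℂ := ∑ ℓ ∈ Icc (-(m : ℤ)) m, (coeff m ℓ : ℂ) * z ^ ℓ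

theorem norm_coeffSum_le {z : ℂ} (hz : ‖z‖ = 1) : ‖coeffSum m z‖ ≤ 3 * m ^ 4 := by
  have hsum := sum_le_card_nsmul (Icc (-(m : ℤ)) m) _ _ fun ℓ _ => abs_coeff_le m ℓ
  rw [nsmul_eq_mul, Int.card_Icc_of_le _ _ (by omega)] at hsum
  refine (norm_sum_intCast_mul_zpow_le _ _ hz).trans ?_
  have hcube : (m : ℤ) ^ 2 * m ≤ m ^ 2 * m ^ 2 :=
    mul_le_mul_of_nonneg_left (Int.le_self_sq m) (sq_nonneg _)
  exact_mod_cast show ∑ ℓ ∈ Icc (-(m : ℤ)) m, |coeff m ℓ| ≤ 3 * m ^ 4 by nlinarith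

theorem sq_norm_inv_sub_one_mul_norm_coeffSum_le {z : ℂ} (hz : ‖z‖ = 1) :
    ‖z⁻¹ - 1‖ ^ 2 * ‖coeffSum m z‖ ≤ 26 * m ^ 2 := by
  have hz₀ : z ≠ 0 := norm_ne_zero_iff.mp (by rw [hz]; exact one_ne_zero)
  have hvanish : ∀ ℓ ∉ Icc (-(m : ℤ)) m, (coeff m ℓ : ℂ) = 0 := fun ℓ hℓ => by
    rw [coeff_eq_zero m hℓ, Int.cast_zero]
  rw [← norm_pow, ← norm_mul, coeffSum, ← sum_Icc_fwdDiff_fwdDiff_mul_zpow hvanish hz₀]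
  have hcast : ∀ ℓ, Δ_[1] (Δ_[1] fun ℓ => (coeff m ℓ : ℂ)) ℓ
      = ((Δ_[1] (Δ_[1] (coeff m)) ℓ : ℤ) : ℂ) := fun ℓ => by
    simp only [fwdDiff]; push_cast; ring
  simp only [hcast]
  refine (norm_sum_intCast_mul_zpow_le _ _ hz).trans ?_
  exact_mod_cast sum_abs_fwdDiff_fwdDiff_coeff_le m

theorem sq_mul_norm_coeffSum_exp_le {x : ℝ} (hx : |x| ≤ Real.pi) :
    x ^ 2 * ‖coeffSum m (exp (I * x))‖ ≤ 104 * m ^ 2 := by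
  have hlow : 2 / Real.pi * |-x| ≤ ‖(exp (I * x))⁻¹ - 1‖ := by
    rw [← exp_neg, ← mul_neg, ← ofReal_neg]
    exact mul_abs_le_norm_exp_I_mul_ofReal_sub_one (by rwa [abs_neg])
  have hx2 : x ^ 2 ≤ 4 * ‖(exp (I * x))⁻¹ - 1‖ ^ 2 := by
    rw [abs_neg, div_mul_eq_mul_div, div_le_iff₀ Real.pi_pos] at hlow
    have habs : |x| ≤ 2 * ‖(exp (I * x))⁻¹ - 1‖ := by
      nlinarith [Real.pi_le_four, norm_nonneg ((exp (I * x))⁻¹ - 1)]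
    calc x ^ 2 = |x| ^ 2 := (sq_abs x).symm
      _ ≤ (2 * ‖(exp (I * x))⁻¹ - 1‖) ^ 2 := by gcongr
      _ = 4 * ‖(exp (I * x))⁻¹ - 1‖ ^ 2 := by ring
  calc x ^ 2 * ‖coeffSum m (exp (I * x))‖
      ≤ 4 * (‖(exp (I * x))⁻¹ - 1‖ ^ 2 * ‖coeffSum m (exp (I * x))‖) :=
        (mul_le_mul_of_nonneg_right hx2 (norm_nonneg _)).trans_eq (by ring)
    _ ≤ 4 * (26 * m ^ 2) := by
        gcongr 4 * ?_
        exact sq_norm_inv_sub_one_mul_norm_coeffSum_le m (norm_exp_I_mul_ofReal x)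
    _ = 104 * (m : ℝ) ^ 2 := by ring

theorem sum_eq_coeffSum (x : ℝ) :
    ∑ ℓ ∈ Icc (-(m : ℤ)) (m : ℤ),
        ((|ℓ| : ℤ) : ℂ) * ((((m : ℤ) - |ℓ| : ℤ) : ℂ)) ^ 2 * exp (I * (ℓ : ℂ) * (x : ℂ))
      = coeffSum m (exp (I * x)) := by
  refine sum_congr rfl fun ℓ hℓ => ?_
  rw [coeff, if_pos (abs_le.mpr (mem_Icc.mp hℓ)), ← exp_int_mul]
  push_cast
  ring_nf

end FourthMoment

open FourthMoment

/-- there is a constant `C` such that for all `n ∈ ℕ`, `t ∈ [0,1]`,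
`0 < |θ| < nπ`, with `m := ⌊nt⌋`:
`|∑_{ℓ=-m}^{m} |ℓ|(m-|ℓ|)² e^{iℓθ/n}| ≤ C n⁴ t² min{t², 1/θ²}`. -/
theorem stmt_13 :
    ∃ C : ℝ, 0 < C ∧
      ∀ (n : ℕ) (t θ : ℝ) (m : ℕ), m = ⌊(n : ℝ) * t⌋₊ →
        t ∈ Set.Icc (0:ℝ) 1 → 0 < |θ| → |θ| < (n : ℝ) * Real.pi →
        ‖(∑ ℓ ∈ Finset.Icc (-(m : ℤ)) (m : ℤ),
            ((|ℓ| : ℤ) : ℂ) * ((((m : ℤ) - |ℓ| : ℤ) : ℂ)) ^ 2 *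
              Complex.exp (Complex.I * (ℓ : ℂ) * ((θ / n : ℝ) : ℂ)))‖
          ≤ C * (n : ℝ) ^ 4 * t ^ 2 * min (t ^ 2) (1 / θ ^ 2) := by
  refine ⟨104, by norm_num, fun n t θ m hm ⟨ht₀, _⟩ hθ hθn => ?_⟩
  have hn : (0 : ℝ) < n := by
    by_contra! hn
    nlinarith [Real.pi_pos]
  have hmn : (m : ℝ) ≤ n * t := hm ▸ Nat.floor_le (by positivity)
  rw [sum_eq_coeffSum, mul_min_of_nonneg _ _ (by positivity)]
  refine le_min ?_ ?_
  · calc ‖coeffSum m (exp (I * ↑(θ / n)))‖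
        ≤ 3 * m ^ 4 := norm_coeffSum_le m (norm_exp_I_mul_ofReal _)
      _ ≤ 104 * (n * t) ^ 4 := by gcongr; norm_num
      _ = 104 * n ^ 4 * t ^ 2 * t ^ 2 := by ring
  · have hx : |θ / n| ≤ Real.pi := by
      rw [abs_div, Nat.abs_cast, div_le_iff₀ hn]; linarith
    have hθ₀ : 0 < θ ^ 2 := by have := abs_pos.mp hθ; positivity
    rw [mul_one_div, le_div_iff₀ hθ₀]
    calc ‖coeffSum m (exp (I * ↑(θ / n)))‖ * θ ^ 2
        = n ^ 2 * ((θ / n) ^ 2 * ‖coeffSum m (exp (I * ↑(θ / n)))‖) := by field_simp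
      _ ≤ n ^ 2 * (104 * (n * t) ^ 2) := by
        gcongr _ * ?_
        exact (sq_mul_norm_coeffSum_exp_le m hx).trans (by gcongr)
      _ = 104 * n ^ 4 * t ^ 2 := by ring
end
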